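/- In an ARAT discounted Markov game (additive rewards and additive transitions: Q(D|x,a₁,a₂)=∫_D[q₁(y,x,a₁)+q₂(y,x,a₂)]λ(dy)), for every initial distribution η and every pair of history-dependent policies (π₁,π₂) there exists a pair of stationary Markov policies (π₁′,π₂′) such that the (X×A₁)-marginal and the (X×A₂)-marginal of the occupation measure μ_{η,π₁,π₂} coincide with those of μ_{η,π₁′,π₂′}. Moreover, if π_i is already stationary Markov, one can take π_i′ = π_i. -/

import Mathlib

open MeasureTheory ProbabilityTheory Filter Topology
open scoped NNReal ENNReal

universe u

/-- The space of histories `H_t = (X × A₁ × A₂)^t × X`, built recursively: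
`H_0 = X` and `H_{t+1} = H_t × (A₁ × A₂) × X`. -/
def Hist (X A₁ A₂ : Type u) : ℕ → Type u
  | 0 => X
  | t + 1 => Hist X A₁ A₂ t × (A₁ × A₂) × X

noncomputable instance histMeasurableSpace {X A₁ A₂ : Type u} [MeasurableSpace X]
    [MeasurableSpace A₁] [MeasurableSpace A₂] :
    ∀ t, MeasurableSpace (Hist X A₁ A₂ t)
  | 0 => ‹MeasurableSpace X›
  | t + 1 =>
    letI := histMeasurableSpace (X := X) (A₁ := A₁) (A₂ := A₂) t
    inferInstanceAs (MeasurableSpace (Hist X A₁ A₂ t × (A₁ × A₂) × X))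

/-- The current state `x_t` of a history `h_t ∈ H_t`. -/
def curState {X A₁ A₂ : Type u} : ∀ t, Hist X A₁ A₂ t → X
  | 0 => id
  | _ + 1 => fun h => h.2.2

lemma measurable_curState {X A₁ A₂ : Type u} [MeasurableSpace X]
    [MeasurableSpace A₁] [MeasurableSpace A₂] :
    ∀ t, Measurable (curState (X := X) (A₁ := A₁) (A₂ := A₂) t)
  | 0 => measurable_id
  | _ + 1 => measurable_snd.comp measurable_snd

/-- The distribution on histories `H_t` induced by the initial distribution `η`, the
transition kernel `Q` and the history-dependent policies `(π₁, π₂)`: the initial state has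
distribution `η`, at each stage the actions are drawn independently from `π₁^t(·|h_t)` and
`π₂^t(·|h_t)`, and the next state from `Q(·|x_t, a_t, b_t)`. -/
noncomputable def traj {X A₁ A₂ : Type u} [MeasurableSpace X]
    [MeasurableSpace A₁] [MeasurableSpace A₂]
    (η : Measure X) (Q : Kernel (X × A₁ × A₂) X)
    (π₁ : ∀ t, Kernel (Hist X A₁ A₂ t) A₁) (π₂ : ∀ t, Kernel (Hist X A₁ A₂ t) A₂) :
    ∀ t, Measure (Hist X A₁ A₂ t)
  | 0 => η
  | t + 1 =>
    (traj η Q π₁ π₂ t) ⊗ₘ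
      ((π₁ t ×ₖ π₂ t) ⊗ₖ
        (Q.comap (fun p : Hist X A₁ A₂ t × (A₁ × A₂) => (curState t p.1, p.2))
          (((measurable_curState t).comp measurable_fst).prodMk measurable_snd)))

/-- The joint law of the state-action triple `(X_t, A_t, B_t)` at time `t`. -/
noncomputable def stepLaw {X A₁ A₂ : Type u} [MeasurableSpace X]
    [MeasurableSpace A₁] [MeasurableSpace A₂]
    (η : Measure X) (Q : Kernel (X × A₁ × A₂) X)
    (π₁ : ∀ t, Kernel (Hist X A₁ A₂ t) A₁) (π₂ : ∀ t, Kernel (Hist X A₁ A₂ t) A₂)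
    (t : ℕ) : Measure (X × A₁ × A₂) :=
  (traj η Q π₁ π₂ (t + 1)).map
    (fun h : Hist X A₁ A₂ t × (A₁ × A₂) × X => (curState t h.1, h.2.1))

/-- The occupation measure of the pair of history-dependent policies `(π₁, π₂)` with initial
distribution `η`: `μ_{η,π₁,π₂} = (1-β) ∑_t β^t law(X_t, A_t, B_t)`. -/
noncomputable def occHD {X A₁ A₂ : Type u} [MeasurableSpace X]
    [MeasurableSpace A₁] [MeasurableSpace A₂]
    (β : ℝ≥0) (η : Measure X) (Q : Kernel (X × A₁ × A₂) X)
    (π₁ : ∀ t, Kernel (Hist X A₁ A₂ t) A₁) (π₂ : ∀ t, Kernel (Hist X A₁ A₂ t) A₂) :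
    Measure (X × A₁ × A₂) :=
  Measure.sum fun t : ℕ => ((1 - β) * β ^ t) • stepLaw η Q π₁ π₂ t
/-- One-step transition operator on measures for the pair of stationary Markov policies
`(π₁, π₂)`:  `γ ↦ γ Q_{π₁,π₂}`. -/
noncomputable def gstep {X A₁ A₂ : Type*} [MeasurableSpace X] [MeasurableSpace A₁]
    [MeasurableSpace A₂] (Q : Kernel (X × A₁ × A₂) X)
    (π₁ : Kernel X A₁) (π₂ : Kernel X A₂) (γ : Measure X) : Measure X :=
  γ.bind fun x => ((π₁ ×ₖ π₂) x).bind fun a => Q (x, a)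

/-- The `X`-marginal of the occupation measure of `(π₁, π₂)` with initial distribution `η`:
`(1-β) ∑_t β^t η Q^t_{π₁,π₂}`. -/
noncomputable def occX {X A₁ A₂ : Type*} [MeasurableSpace X] [MeasurableSpace A₁]
    [MeasurableSpace A₂] (β : ℝ≥0) (Q : Kernel (X × A₁ × A₂) X)
    (π₁ : Kernel X A₁) (π₂ : Kernel X A₂) (η : Measure X) : Measure X :=
  Measure.sum fun t : ℕ => ((1 - β) * β ^ t) • (gstep Q π₁ π₂)^[t] η

/-- The occupation measure on `X × A₁ × A₂` of the stationary Markov pair `(π₁, π₂)`. -/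
noncomputable def occ {X A₁ A₂ : Type*} [MeasurableSpace X] [MeasurableSpace A₁]
    [MeasurableSpace A₂] (β : ℝ≥0) (Q : Kernel (X × A₁ × A₂) X)
    (π₁ : Kernel X A₁) (π₂ : Kernel X A₂) (η : Measure X) : Measure (X × A₁ × A₂) :=
  (occX β Q π₁ π₂ η) ⊗ₘ (π₁ ×ₖ π₂)

/-- The `(X × A₁)`-marginal of the occupation measure: `μ^X_{η,π₁,π₂} ⊗ π₁`. -/
noncomputable def occ1 {X A₁ A₂ : Type*} [MeasurableSpace X] [MeasurableSpace A₁]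
    [MeasurableSpace A₂] (β : ℝ≥0) (Q : Kernel (X × A₁ × A₂) X)
    (π₁ : Kernel X A₁) (π₂ : Kernel X A₂) (η : Measure X) : Measure (X × A₁) :=
  (occX β Q π₁ π₂ η) ⊗ₘ π₁

/-- The `(X × A₂)`-marginal of the occupation measure: `μ^X_{η,π₁,π₂} ⊗ π₂`. -/
noncomputable def occ2 {X A₁ A₂ : Type*} [MeasurableSpace X] [MeasurableSpace A₁]
    [MeasurableSpace A₂] (β : ℝ≥0) (Q : Kernel (X × A₁ × A₂) X)
    (π₁ : Kernel X A₁) (π₂ : Kernel X A₂) (η : Measure X) : Measure (X × A₂) :=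
  (occX β Q π₁ π₂ η) ⊗ₘ π₂

/-! By the ARAT structure, `∫ Q(D | p) ν(dp)` depends on a state-action measure `ν` only
through its `(X × A₁)`- and `(X × A₂)`-marginals. Disintegrate the two marginals of
`μ = μ_{η,π₁,π₂}` over its state marginal `μ_X`: this gives stationary kernels `π₁'`, `π₂'`,
made feasible by changing them on a `μ_X`-null set (a stationary `π_i` is already such a
disintegration). Then `μ_X` solves the flow equation `μ_X = (1 - β) η + β μ_X Q_{π₁',π₂'}`,
whose only finite solution is the state marginal of `μ_{η,π₁',π₂'}`; hence both marginals of `μ`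
are those of `μ_{η,π₁',π₂'}`. -/

attribute [fun_prop] measurable_curState

section Selection

variable {X A : Type*} [MeasurableSpace X] [MeasurableSpace A]

lemma measurableSet_graph_of_isClosed [MetricSpace A] [SecondCountableTopology A] [BorelSpace A]
    {F : X → Set A} (hF : ∀ U : Set A, IsOpen U → MeasurableSet {x | (F x ∩ U).Nonempty})
    (hcl : ∀ x, IsClosed (F x)) :
    MeasurableSet {p : X × A | p.2 ∈ F p.1} := by
  have hdist : ∀ a : A, Measurable fun x => Metric.infEDist a (F x) := by
    refine fun a => measurable_of_Iio fun r => ?_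
    convert hF _ (Metric.isOpen_eball (x := a) (ε := r)) using 1
    ext x
    simp [Metric.infEDist_lt_iff, Set.Nonempty, Metric.mem_eball, edist_comm]
  -- a Carathéodory function: measurable in `x`, continuous in `a`
  have hjoint : Measurable fun q : A × X => Metric.infEDist q.1 (F q.2) :=
    measurable_uncurry_of_continuous_of_measurable (u := fun a x => Metric.infEDist a (F x))
      (fun _ => Metric.continuous_infEDist) hdist
  have hgraph : {p : X × A | p.2 ∈ F p.1} =
      (fun p : X × A => Metric.infEDist p.2 (F p.1)) ⁻¹' {0} := by
    ext p
    simp [Metric.mem_iff_infEDist_zero_of_closed (hcl p.1)]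
  rw [hgraph]
  exact (hjoint.comp measurable_swap) (measurableSet_singleton 0)

lemma exists_markovKernel_compProd_eq [StandardBorelSpace A] [Nonempty A] {F : X → Set A}
    (hG : MeasurableSet {p : X × A | p.2 ∈ F p.1})
    (ρ : Measure (X × A)) [IsFiniteMeasure ρ] (hρ : ∀ᵐ p ∂ρ, p.2 ∈ F p.1)
    (κ₀ : Kernel X A) [IsMarkovKernel κ₀] (hκ₀ : ∀ x, κ₀ x (F x) = 1) :
    ∃ κ : Kernel X A, IsMarkovKernel κ ∧ (∀ x, κ x (F x) = 1) ∧ ρ.fst ⊗ₘ κ = ρ := by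
  have hsec : ∀ x : X, Prod.mk x ⁻¹' {p : X × A | p.2 ∈ F p.1} = F x := fun x => rfl
  have hmeas : Measurable fun x => ρ.condKernel x (F x) := by
    simpa only [hsec] using Kernel.measurable_kernel_prodMk_left (κ := ρ.condKernel) hG
  have hae : ∀ᵐ x ∂ρ.fst, ρ.condKernel x (F x) = 1 := by
    rw [← ρ.disintegrate ρ.condKernel, Measure.ae_compProd_iff hG] at hρ
    filter_upwards [hρ] with x hx
    rwa [ae_iff_measure_eq (p := (· ∈ F x)) (measurable_prodMk_left hG).nullMeasurableSet,
      measure_univ] at hx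
  -- the conditional kernel is feasible off a null set, where we switch to `κ₀`
  set N := {x | ρ.condKernel x (F x) ≠ 1}
  have hN : MeasurableSet N := (hmeas (measurableSet_singleton 1)).compl
  refine ⟨Kernel.piecewise hN κ₀ ρ.condKernel, inferInstance, fun x => ?_, ?_⟩
  · rw [Kernel.piecewise_apply]
    split_ifs with hx
    · exact hκ₀ x
    · exact not_not.1 hx
  · conv_rhs => rw [← ρ.disintegrate ρ.condKernel]
    refine Measure.compProd_congr ?_
    filter_upwards [hae] with x hx
    rw [Kernel.piecewise_apply, if_neg (show x ∉ N from not_not.2 hx)]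

end Selection

section DiscountedSum

variable {α β' : Type*} [MeasurableSpace α] [MeasurableSpace β']

noncomputable def discountedSum (β : ℝ≥0) (ν : ℕ → Measure α) : Measure α :=
  Measure.sum fun t => ((1 - β) * β ^ t) • ν t

lemma discountedSum_apply (β : ℝ≥0) (ν : ℕ → Measure α) {s : Set α} (hs : MeasurableSet s) :
    discountedSum β ν s = ∑' t, (1 - (β : ℝ≥0∞)) * β ^ t * ν t s := by
  simp [discountedSum, Measure.sum_apply _ hs, ENNReal.smul_def]

lemma tsum_discount {β : ℝ≥0} (hβ : β < 1) :
    ∑' t : ℕ, (1 - (β : ℝ≥0∞)) * β ^ t = 1 := by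
  rw [ENNReal.tsum_mul_left, ENNReal.tsum_geometric,
    ENNReal.mul_inv_cancel (tsub_pos_of_lt (by exact_mod_cast hβ)).ne' (by simp)]

lemma isProbabilityMeasure_discountedSum {β : ℝ≥0} (hβ : β < 1) (ν : ℕ → Measure α)
    [∀ t, IsProbabilityMeasure (ν t)] : IsProbabilityMeasure (discountedSum β ν) :=
  ⟨by simp [discountedSum_apply _ _ MeasurableSet.univ, tsum_discount hβ]⟩

lemma map_discountedSum (β : ℝ≥0) (ν : ℕ → Measure α) {f : α → β'} (hf : Measurable f) :
    (discountedSum β ν).map f = discountedSum β fun t => (ν t).map f := by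
  simp only [discountedSum, Measure.map_sum hf.aemeasurable, Measure.map_smul]

lemma comp_discountedSum (β : ℝ≥0) (ν : ℕ → Measure α) (κ : Kernel α β') :
    κ ∘ₘ discountedSum β ν = discountedSum β fun t => κ ∘ₘ ν t := by
  simp only [discountedSum, Measure.bind_sum _ _ κ.aemeasurable, Measure.bind_smul]

lemma discountedSum_compProd (β : ℝ≥0) (ν : ℕ → Measure α) [∀ t, SFinite (ν t)]
    (κ : Kernel α β') [IsSFiniteKernel κ] :
    discountedSum β ν ⊗ₘ κ = discountedSum β fun t => ν t ⊗ₘ κ := by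
  simp only [discountedSum, Measure.compProd_sum_left, ← Measure.coe_nnreal_smul,
    Measure.compProd_smul_left]

lemma discountedSum_eq_add (β : ℝ≥0) (ν : ℕ → Measure α) :
    discountedSum β ν = (1 - β) • ν 0 + β • discountedSum β fun t => ν (t + 1) := by
  ext s hs
  simp only [Measure.add_apply, Measure.smul_apply, discountedSum_apply _ _ hs,
    ENNReal.smul_def, smul_eq_mul, ← ENNReal.tsum_mul_left]
  rw [tsum_eq_zero_add' ENNReal.summable, ENNReal.coe_sub, ENNReal.coe_one]
  congr 1
  · ring
  · exact tsum_congr fun t => by ring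

lemma ae_discountedSum {β : ℝ≥0} {ν : ℕ → Measure α} {p : α → Prop}
    (h : ∀ t, ∀ᵐ x ∂ν t, p x) : ∀ᵐ x ∂discountedSum β ν, p x :=
  Measure.ae_sum_iff.2 fun t => Measure.ae_smul_measure (h t) _

end DiscountedSum

section FixedPoint

variable {α : Type*} [MeasurableSpace α]

lemma iterate_comp_apply_univ (K : Kernel α α) [IsMarkovKernel K] (ν : Measure α) (n : ℕ) :
    ((K ∘ₘ ·)^[n] ν) Set.univ = ν Set.univ := by
  induction n generalizing ν with
  | zero => rfl
  | succ n ih => rw [Function.iterate_succ_apply, ih, Measure.comp_apply_univ]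

lemma apply_eq_sum_range_add_of_eq_add {β : ℝ≥0} (K : Kernel α α) {η ν : Measure α}
    (hν : ν = (1 - β) • η + β • (K ∘ₘ ν)) (n : ℕ) (s : Set α) :
    ν s = ∑ t ∈ Finset.range n, (1 - (β : ℝ≥0∞)) * β ^ t * ((K ∘ₘ ·)^[t] η) s
      + β ^ n * ((K ∘ₘ ·)^[n] ν) s := by
  induction n generalizing η ν with
  | zero => simp
  | succ n ih =>
    have hKν : K ∘ₘ ν = (1 - β) • (K ∘ₘ η) + β • (K ∘ₘ (K ∘ₘ ν)) := by
      conv_lhs => rw [hν]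
      rw [Measure.comp_add, ← Measure.coe_nnreal_smul, ← Measure.coe_nnreal_smul,
        Measure.comp_smul, Measure.comp_smul]
      rfl
    have hstep : ν s = (1 - (β : ℝ≥0∞)) * η s + β * (K ∘ₘ ν) s := by
      conv_lhs => rw [hν]
      simp only [Measure.add_apply, Measure.smul_apply, ENNReal.smul_def, smul_eq_mul,
        ENNReal.coe_sub, ENNReal.coe_one]
    rw [hstep, ih hKν, Finset.sum_range_succ', mul_add, Finset.mul_sum]
    simp only [Function.iterate_succ_apply, Function.iterate_zero_apply, pow_succ]
    ring_nf

lemma eq_discountedSum_of_eq_add {β : ℝ≥0} (hβ : β < 1) (K : Kernel α α) [IsMarkovKernel K]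
    {η ν : Measure α} [IsFiniteMeasure ν] (hν : ν = (1 - β) • η + β • (K ∘ₘ ν)) :
    ν = discountedSum β fun t => (K ∘ₘ ·)^[t] η := by
  ext s hs
  rw [discountedSum_apply _ _ hs]
  set S := ∑' t, (1 - (β : ℝ≥0∞)) * β ^ t * ((K ∘ₘ ·)^[t] η) s
  refine le_antisymm ?_ ?_
  · have hle : ∀ n, ν s ≤ S + β ^ n * ν Set.univ := fun n => by
      rw [apply_eq_sum_range_add_of_eq_add K hν n s, ← iterate_comp_apply_univ K ν n]
      gcongr
      · exact ENNReal.sum_le_tsum _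
      · exact Set.subset_univ s
    have hlim : Tendsto (fun n => S + (β : ℝ≥0∞) ^ n * ν Set.univ) atTop
        (𝓝 (S + 0 * ν Set.univ)) :=
      tendsto_const_nhds.add (ENNReal.Tendsto.mul_const
        (ENNReal.tendsto_pow_atTop_nhds_zero_of_lt_one (by exact_mod_cast hβ))
        (Or.inr (measure_ne_top ν _)))
    rw [zero_mul, add_zero] at hlim
    exact ge_of_tendsto' hlim hle
  · refine ENNReal.tsum_le_of_sum_range_le fun n => ?_
    rw [apply_eq_sum_range_add_of_eq_add K hν n s]
    exact le_self_add

end FixedPoint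

section MarkovKernels

variable {X A₁ A₂ : Type*} [MeasurableSpace X] [MeasurableSpace A₁] [MeasurableSpace A₂]

lemma map_compProd_prod_fst (μ : Measure X) [SFinite μ] (κ₁ : Kernel X A₁) [IsSFiniteKernel κ₁]
    (κ₂ : Kernel X A₂) [IsMarkovKernel κ₂] :
    (μ ⊗ₘ (κ₁ ×ₖ κ₂)).map (fun q => (q.1, q.2.1)) = μ ⊗ₘ κ₁ := by
  have h := Measure.compProd_map (μ := μ) (κ := κ₁ ×ₖ κ₂) measurable_fst
  rw [← Kernel.fst_eq, Kernel.fst_prod] at h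
  exact h.symm

lemma map_compProd_prod_snd (μ : Measure X) [SFinite μ] (κ₁ : Kernel X A₁) [IsMarkovKernel κ₁]
    (κ₂ : Kernel X A₂) [IsSFiniteKernel κ₂] :
    (μ ⊗ₘ (κ₁ ×ₖ κ₂)).map (fun q => (q.1, q.2.2)) = μ ⊗ₘ κ₂ := by
  have h := Measure.compProd_map (μ := μ) (κ := κ₁ ×ₖ κ₂) measurable_snd
  rw [← Kernel.snd_eq, Kernel.snd_prod] at h
  exact h.symm

lemma gstep_eq_comp (Q : Kernel (X × A₁ × A₂) X) (κ₁ : Kernel X A₁) (κ₂ : Kernel X A₂)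
    [IsSFiniteKernel κ₁] [IsSFiniteKernel κ₂] :
    gstep Q κ₁ κ₂ = fun γ => (Q ∘ₖ (Kernel.id ×ₖ (κ₁ ×ₖ κ₂))) ∘ₘ γ := by
  funext γ
  refine congrArg γ.bind (funext fun x => Measure.ext fun s hs => ?_)
  rw [Kernel.comp_apply' _ _ _ hs,
    Measure.bind_apply hs (f := fun a => Q (x, a))
      (Q.measurable.comp measurable_prodMk_left).aemeasurable,
    Kernel.prod_apply Kernel.id, Kernel.id_apply, Measure.dirac_prod,
    lintegral_map (Q.measurable_coe hs) measurable_prodMk_left]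

end MarkovKernels

section CompProd

variable {H X A : Type*} [MeasurableSpace H] [MeasurableSpace X] [MeasurableSpace A]

lemma map_prodMap_compProd_comap (μ : Measure H) [SFinite μ] {f : H → X} (hf : Measurable f)
    (κ : Kernel X A) [IsSFiniteKernel κ] :
    (μ ⊗ₘ κ.comap f hf).map (Prod.map f id) = μ.map f ⊗ₘ κ := by
  ext s hs
  rw [Measure.map_apply (hf.prodMap measurable_id) hs,
    Measure.compProd_apply (hf.prodMap measurable_id hs), Measure.compProd_apply hs,
    lintegral_map (Kernel.measurable_kernel_prodMk_left hs) hf]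
  rfl

lemma ae_map_prodMap_compProd (μ : Measure H) [SFinite μ] {f : H → X} (hf : Measurable f)
    (κ : Kernel H A) [IsSFiniteKernel κ] {F : X → Set A}
    (hG : MeasurableSet {p : X × A | p.2 ∈ F p.1}) (hκ : ∀ h, ∀ᵐ a ∂κ h, a ∈ F (f h)) :
    ∀ᵐ p ∂(μ ⊗ₘ κ).map (Prod.map f id), p.2 ∈ F p.1 := by
  rw [ae_map_iff (hf.prodMap measurable_id).aemeasurable hG]
  exact Measure.ae_compProd_of_ae_ae (hf.prodMap measurable_id hG) (ae_of_all _ hκ)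

end CompProd

section Additive

variable {X A₁ A₂ : Type*} [MeasurableSpace X] [MeasurableSpace A₁] [MeasurableSpace A₂]

def DependsOnlyOnMarginals {Y : Type*} [MeasurableSpace Y] (Q : Kernel (X × A₁ × A₂) Y) : Prop :=
  ∀ ν ν' : Measure (X × A₁ × A₂),
    ν.map (fun q => (q.1, q.2.1)) = ν'.map (fun q => (q.1, q.2.1)) →
    ν.map (fun q => (q.1, q.2.2)) = ν'.map (fun q => (q.1, q.2.2)) → Q ∘ₘ ν = Q ∘ₘ ν'

lemma dependsOnlyOnMarginals_of_apply_eq_add {Y : Type*} [MeasurableSpace Y]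
    {Q : Kernel (X × A₁ × A₂) Y} {g₁ : Set Y → X × A₁ → ℝ≥0∞} {g₂ : Set Y → X × A₂ → ℝ≥0∞}
    (hg₁ : ∀ D, Measurable (g₁ D)) (hg₂ : ∀ D, Measurable (g₂ D))
    (hQ : ∀ p D, MeasurableSet D → Q p D = g₁ D (p.1, p.2.1) + g₂ D (p.1, p.2.2)) :
    DependsOnlyOnMarginals Q := by
  have hsplit : ∀ (μ : Measure (X × A₁ × A₂)) D, MeasurableSet D → (Q ∘ₘ μ) D =
      ∫⁻ r, g₁ D r ∂μ.map (fun q => (q.1, q.2.1)) +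
        ∫⁻ r, g₂ D r ∂μ.map (fun q => (q.1, q.2.2)) := by
    intro μ D hD
    rw [Measure.bind_apply hD Q.aemeasurable, lintegral_congr fun p => hQ p D hD,
      lintegral_add_left (f := fun q : X × A₁ × A₂ => g₁ D (q.1, q.2.1))
        ((hg₁ D).comp (by fun_prop)), lintegral_map (hg₁ D) (by fun_prop),
      lintegral_map (hg₂ D) (by fun_prop)]
  intro ν ν' h₁ h₂
  ext D hD
  rw [hsplit ν D hD, hsplit ν' D hD, h₁, h₂]

lemma measurable_setLIntegral_ofReal {A : Type*} [MeasurableSpace A] (lam : Measure X)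
    [SFinite lam] {q : X → X → A → ℝ} (hq : Measurable fun r : X × X × A => q r.1 r.2.1 r.2.2)
    (D : Set X) :
    Measurable fun r : X × A => ∫⁻ y in D, ENNReal.ofReal (q y r.1 r.2) ∂lam :=
  (hq.comp (f := fun z : (X × A) × X => (z.2, z.1.1, z.1.2)) (by fun_prop)).ennreal_ofReal
    |>.lintegral_prod_right'

lemma apply_eq_add_of_density {Q : Kernel (X × A₁ × A₂) X} {lam : Measure X}
    {q₁ : X → X → A₁ → ℝ} {q₂ : X → X → A₂ → ℝ}
    (hq₁meas : Measurable fun r : X × X × A₁ => q₁ r.1 r.2.1 r.2.2)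
    (hq₁pos : ∀ y x a, 0 ≤ q₁ y x a) (hq₂pos : ∀ y x a, 0 ≤ q₂ y x a)
    (hQdens : ∀ x a₁ a₂ D, MeasurableSet D →
      Q (x, a₁, a₂) D = ∫⁻ y in D, ENNReal.ofReal (q₁ y x a₁ + q₂ y x a₂) ∂lam)
    (p : X × A₁ × A₂) {D : Set X} (hD : MeasurableSet D) :
    Q p D = ∫⁻ y in D, ENNReal.ofReal (q₁ y p.1 p.2.1) ∂lam
      + ∫⁻ y in D, ENNReal.ofReal (q₂ y p.1 p.2.2) ∂lam := by
  rw [hQdens p.1 p.2.1 p.2.2 D hD, ← lintegral_add_left (by fun_prop)]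
  exact lintegral_congr fun y => ENNReal.ofReal_add (hq₁pos _ _ _) (hq₂pos _ _ _)

end Additive

section Histories

variable {X A₁ A₂ : Type u} [MeasurableSpace X] [MeasurableSpace A₁] [MeasurableSpace A₂]
  {η : Measure X} {Q : Kernel (X × A₁ × A₂) X}
  {π₁ : ∀ t, Kernel (Hist X A₁ A₂ t) A₁} {π₂ : ∀ t, Kernel (Hist X A₁ A₂ t) A₂}

noncomputable def stepKernel (Q : Kernel (X × A₁ × A₂) X)
    (π₁ : ∀ t, Kernel (Hist X A₁ A₂ t) A₁) (π₂ : ∀ t, Kernel (Hist X A₁ A₂ t) A₂) (t : ℕ) :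
    Kernel (Hist X A₁ A₂ t) ((A₁ × A₂) × X) :=
  (π₁ t ×ₖ π₂ t) ⊗ₖ Q.comap (Prod.map (curState t) id)
    ((measurable_curState t).prodMap measurable_id)

-- `Hist X A₁ A₂ (t + 1)` carries `histMeasurableSpace (t + 1)`, which is the product
-- σ-algebra only up to unfolding; these two lemmas move to the product once and for all.
lemma stepLaw_eq_map_traj (t : ℕ) : stepLaw η Q π₁ π₂ t =
    (traj η Q π₁ π₂ t ⊗ₘ stepKernel Q π₁ π₂ t).map fun h => (curState t h.1, h.2.1) := rfl

lemma map_curState_traj_succ_eq (t : ℕ) :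
    (traj η Q π₁ π₂ (t + 1)).map (curState (t + 1)) =
      (traj η Q π₁ π₂ t ⊗ₘ stepKernel Q π₁ π₂ t).map fun h => h.2.2 := rfl

variable [IsMarkovKernel Q] [∀ t, IsMarkovKernel (π₁ t)] [∀ t, IsMarkovKernel (π₂ t)]

instance (t : ℕ) : IsMarkovKernel (stepKernel Q π₁ π₂ t) := by
  rw [stepKernel]; infer_instance

variable [IsProbabilityMeasure η]

instance isProbabilityMeasure_traj (t : ℕ) : IsProbabilityMeasure (traj η Q π₁ π₂ t) := by
  induction t with
  | zero => exact ‹IsProbabilityMeasure η›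
  | succ t ih =>
    exact inferInstanceAs (IsProbabilityMeasure (traj η Q π₁ π₂ t ⊗ₘ stepKernel Q π₁ π₂ t))

lemma stepLaw_eq_map_compProd (t : ℕ) :
    stepLaw η Q π₁ π₂ t =
      (traj η Q π₁ π₂ t ⊗ₘ (π₁ t ×ₖ π₂ t)).map (Prod.map (curState t) id) := by
  have hc := measurable_curState (X := X) (A₁ := A₁) (A₂ := A₂) t
  rw [stepLaw_eq_map_traj,
    show (fun h : Hist X A₁ A₂ t × (A₁ × A₂) × X => (curState t h.1, h.2.1))
      = Prod.map (curState t) id ∘ Prod.map id Prod.fst from rfl,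
    ← Measure.map_map (hc.prodMap measurable_id) (measurable_id.prodMap measurable_fst),
    ← Measure.compProd_map measurable_fst, ← Kernel.fst_eq, stepKernel, Kernel.fst_compProd]

lemma map_curState_traj_succ (t : ℕ) :
    (traj η Q π₁ π₂ (t + 1)).map (curState (t + 1)) = Q ∘ₘ stepLaw η Q π₁ π₂ t := by
  have hc := (measurable_curState (X := X) (A₁ := A₁) (A₂ := A₂) t).prodMap
    (measurable_id (α := A₁ × A₂))
  rw [stepLaw_eq_map_compProd, ← Measure.deterministic_comp_eq_map hc, Measure.comp_assoc,
    Kernel.comp_deterministic_eq_comap, Measure.comp_compProd_comm, ← Measure.snd_compProd,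
    Measure.snd, Measure.snd, Measure.map_map measurable_snd measurable_snd,
    map_curState_traj_succ_eq, stepKernel]
  rfl

instance isProbabilityMeasure_stepLaw (t : ℕ) :
    IsProbabilityMeasure (stepLaw η Q π₁ π₂ t) := by
  rw [stepLaw_eq_map_compProd]
  exact Measure.isProbabilityMeasure_map
    ((measurable_curState t).prodMap measurable_id).aemeasurable

end Histories

section Occupation

variable {X A₁ A₂ : Type u} [MeasurableSpace X] [MeasurableSpace A₁] [MeasurableSpace A₂]
  {β : ℝ≥0} {η : Measure X} {Q : Kernel (X × A₁ × A₂) X}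
  {π₁ : ∀ t, Kernel (Hist X A₁ A₂ t) A₁} {π₂ : ∀ t, Kernel (Hist X A₁ A₂ t) A₂}

lemma occHD_eq_discountedSum : occHD β η Q π₁ π₂ = discountedSum β (stepLaw η Q π₁ π₂) := rfl

variable [IsProbabilityMeasure η] [IsMarkovKernel Q] [∀ t, IsMarkovKernel (π₁ t)]
  [∀ t, IsMarkovKernel (π₂ t)]

lemma isProbabilityMeasure_occHD (hβ : β < 1) : IsProbabilityMeasure (occHD β η Q π₁ π₂) :=
  isProbabilityMeasure_discountedSum hβ _

lemma map_fst_occHD :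
    (occHD β η Q π₁ π₂).map Prod.fst =
      discountedSum β fun t => (traj η Q π₁ π₂ t).map (curState t) := by
  rw [occHD_eq_discountedSum, map_discountedSum _ _ measurable_fst]
  congr with t : 1
  rw [stepLaw_eq_map_compProd, Measure.map_map measurable_fst (by fun_prop),
    show Prod.fst ∘ Prod.map (curState t) id = curState t ∘ Prod.fst from rfl,
    ← Measure.map_map (by fun_prop) measurable_fst, ← Measure.fst, Measure.fst_compProd]

lemma map_fst_occHD_eq_add :
    (occHD β η Q π₁ π₂).map Prod.fst = (1 - β) • η + β • (Q ∘ₘ occHD β η Q π₁ π₂) := by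
  rw [map_fst_occHD, discountedSum_eq_add, occHD_eq_discountedSum, comp_discountedSum]
  simp_rw [map_curState_traj_succ]
  congr 2
  exact Measure.map_id

lemma map_occHD_fst :
    (occHD β η Q π₁ π₂).map (fun q => (q.1, q.2.1)) =
      discountedSum β fun t => (traj η Q π₁ π₂ t ⊗ₘ π₁ t).map (Prod.map (curState t) id) := by
  rw [occHD_eq_discountedSum, map_discountedSum _ _ (by fun_prop)]
  congr with t : 1
  rw [stepLaw_eq_map_compProd, Measure.map_map (by fun_prop) (by fun_prop),
    show (fun q : X × A₁ × A₂ => (q.1, q.2.1)) ∘ Prod.map (curState t) id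
      = Prod.map (curState t) id ∘ fun q => (q.1, q.2.1) from rfl,
    ← Measure.map_map (by fun_prop) (by fun_prop), map_compProd_prod_fst]

lemma map_occHD_snd :
    (occHD β η Q π₁ π₂).map (fun q => (q.1, q.2.2)) =
      discountedSum β fun t => (traj η Q π₁ π₂ t ⊗ₘ π₂ t).map (Prod.map (curState t) id) := by
  rw [occHD_eq_discountedSum, map_discountedSum _ _ (by fun_prop)]
  congr with t : 1
  rw [stepLaw_eq_map_compProd, Measure.map_map (by fun_prop) (by fun_prop),
    show (fun q : X × A₁ × A₂ => (q.1, q.2.2)) ∘ Prod.map (curState t) id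
      = Prod.map (curState t) id ∘ fun q => (q.1, q.2.2) from rfl,
    ← Measure.map_map (by fun_prop) (by fun_prop), map_compProd_prod_snd]

lemma map_occHD_fst_of_stationary (σ : Kernel X A₁) [IsMarkovKernel σ]
    (hσ : ∀ t, π₁ t = σ.comap (curState t) (measurable_curState t)) :
    (occHD β η Q π₁ π₂).map (fun q => (q.1, q.2.1)) =
      (occHD β η Q π₁ π₂).map Prod.fst ⊗ₘ σ := by
  rw [map_occHD_fst, map_fst_occHD, discountedSum_compProd]
  congr with t : 1
  rw [hσ t, map_prodMap_compProd_comap]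

lemma map_occHD_snd_of_stationary (σ : Kernel X A₂) [IsMarkovKernel σ]
    (hσ : ∀ t, π₂ t = σ.comap (curState t) (measurable_curState t)) :
    (occHD β η Q π₁ π₂).map (fun q => (q.1, q.2.2)) =
      (occHD β η Q π₁ π₂).map Prod.fst ⊗ₘ σ := by
  rw [map_occHD_snd, map_fst_occHD, discountedSum_compProd]
  congr with t : 1
  rw [hσ t, map_prodMap_compProd_comap]

lemma ae_mem_map_occHD_fst {F : X → Set A₁} (hG : MeasurableSet {p : X × A₁ | p.2 ∈ F p.1})
    (hfeas : ∀ t h, π₁ t h (F (curState t h)) = 1) :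
    ∀ᵐ p ∂(occHD β η Q π₁ π₂).map (fun q => (q.1, q.2.1)), p.2 ∈ F p.1 := by
  rw [map_occHD_fst]
  exact ae_discountedSum fun t => ae_map_prodMap_compProd _ (measurable_curState t) _ hG
    fun h => mem_ae_iff.2 <| (prob_compl_eq_zero_iff (measurable_prodMk_left hG)).2 (hfeas t h)

lemma ae_mem_map_occHD_snd {F : X → Set A₂} (hG : MeasurableSet {p : X × A₂ | p.2 ∈ F p.1})
    (hfeas : ∀ t h, π₂ t h (F (curState t h)) = 1) :
    ∀ᵐ p ∂(occHD β η Q π₁ π₂).map (fun q => (q.1, q.2.2)), p.2 ∈ F p.1 := by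
  rw [map_occHD_snd]
  exact ae_discountedSum fun t => ae_map_prodMap_compProd _ (measurable_curState t) _ hG
    fun h => mem_ae_iff.2 <| (prob_compl_eq_zero_iff (measurable_prodMk_left hG)).2 (hfeas t h)

end Occupation

section Stationary

variable {X A₁ A₂ : Type u} [MeasurableSpace X] [MeasurableSpace A₁] [MeasurableSpace A₂]
  {β : ℝ≥0} {η : Measure X} {Q : Kernel (X × A₁ × A₂) X}
  {π₁ : ∀ t, Kernel (Hist X A₁ A₂ t) A₁} {π₂ : ∀ t, Kernel (Hist X A₁ A₂ t) A₂}
  [IsProbabilityMeasure η] [IsMarkovKernel Q] [∀ t, IsMarkovKernel (π₁ t)]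
  [∀ t, IsMarkovKernel (π₂ t)]

lemma exists_markovKernel_map_occHD_fst [StandardBorelSpace A₁] [Nonempty A₁] (hβ : β < 1)
    {F : X → Set A₁} (hG : MeasurableSet {p : X × A₁ | p.2 ∈ F p.1})
    (hfeas : ∀ t h, π₁ t h (F (curState t h)) = 1) :
    ∃ κ : Kernel X A₁, IsMarkovKernel κ ∧ (∀ x, κ x (F x) = 1) ∧
      (occHD β η Q π₁ π₂).map (fun q => (q.1, q.2.1)) =
        (occHD β η Q π₁ π₂).map Prod.fst ⊗ₘ κ := by
  have : IsProbabilityMeasure (occHD β η Q π₁ π₂) := isProbabilityMeasure_occHD hβ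
  have : @IsMarkovKernel X A₁ _ _ (π₁ 0) := ‹∀ t, IsMarkovKernel (π₁ t)› 0
  obtain ⟨κ, hκ, hκF, h⟩ :=
    exists_markovKernel_compProd_eq hG ((occHD β η Q π₁ π₂).map fun q => (q.1, q.2.1))
      (ae_mem_map_occHD_fst hG hfeas) (π₁ 0) (hfeas 0)
  rw [Measure.fst_map_prodMk (by fun_prop)] at h
  exact ⟨κ, hκ, hκF, h.symm⟩

lemma exists_markovKernel_map_occHD_snd [StandardBorelSpace A₂] [Nonempty A₂] (hβ : β < 1)
    {F : X → Set A₂} (hG : MeasurableSet {p : X × A₂ | p.2 ∈ F p.1})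
    (hfeas : ∀ t h, π₂ t h (F (curState t h)) = 1) :
    ∃ κ : Kernel X A₂, IsMarkovKernel κ ∧ (∀ x, κ x (F x) = 1) ∧
      (occHD β η Q π₁ π₂).map (fun q => (q.1, q.2.2)) =
        (occHD β η Q π₁ π₂).map Prod.fst ⊗ₘ κ := by
  have : IsProbabilityMeasure (occHD β η Q π₁ π₂) := isProbabilityMeasure_occHD hβ
  have : @IsMarkovKernel X A₂ _ _ (π₂ 0) := ‹∀ t, IsMarkovKernel (π₂ t)› 0
  obtain ⟨κ, hκ, hκF, h⟩ :=
    exists_markovKernel_compProd_eq hG ((occHD β η Q π₁ π₂).map fun q => (q.1, q.2.2))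
      (ae_mem_map_occHD_snd hG hfeas) (π₂ 0) (hfeas 0)
  rw [Measure.fst_map_prodMk (by fun_prop)] at h
  exact ⟨κ, hκ, hκF, h.symm⟩

lemma map_occHD_eq_occ1_and_occ2 (hβ : β < 1)
    (hQ : DependsOnlyOnMarginals Q)
    (κ₁ : Kernel X A₁) (κ₂ : Kernel X A₂) [IsMarkovKernel κ₁] [IsMarkovKernel κ₂]
    (h₁ : (occHD β η Q π₁ π₂).map (fun q => (q.1, q.2.1)) =
      (occHD β η Q π₁ π₂).map Prod.fst ⊗ₘ κ₁)
    (h₂ : (occHD β η Q π₁ π₂).map (fun q => (q.1, q.2.2)) =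
      (occHD β η Q π₁ π₂).map Prod.fst ⊗ₘ κ₂) :
    (occHD β η Q π₁ π₂).map (fun q => (q.1, q.2.1)) = occ1 β Q κ₁ κ₂ η ∧
      (occHD β η Q π₁ π₂).map (fun q => (q.1, q.2.2)) = occ2 β Q κ₁ κ₂ η := by
  have : IsProbabilityMeasure (occHD β η Q π₁ π₂) := isProbabilityMeasure_occHD hβ
  have hcomp : Q ∘ₘ occHD β η Q π₁ π₂ =
      Q ∘ₘ ((occHD β η Q π₁ π₂).map Prod.fst ⊗ₘ (κ₁ ×ₖ κ₂)) :=
    hQ _ _ (by rw [map_compProd_prod_fst, h₁]) (by rw [map_compProd_prod_snd, h₂])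
  have hX : (occHD β η Q π₁ π₂).map Prod.fst = occX β Q κ₁ κ₂ η := by
    rw [occX, gstep_eq_comp]
    refine eq_discountedSum_of_eq_add hβ _ ?_
    conv_lhs => rw [map_fst_occHD_eq_add]
    rw [hcomp, Measure.compProd_eq_comp_prod, Measure.comp_assoc]
  exact ⟨by rw [occ1, ← hX, h₁], by rw [occ2, ← hX, h₂]⟩

end Stationary

theorem stmt7_general {X A₁ A₂ : Type u} [MeasurableSpace X]
    [MetricSpace A₁] [CompactSpace A₁] [MeasurableSpace A₁] [BorelSpace A₁]
    [MetricSpace A₂] [CompactSpace A₂] [MeasurableSpace A₂] [BorelSpace A₂]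
    (β : ℝ≥0) (hβ1 : β < 1)
    (lam : Measure X) [IsProbabilityMeasure lam]
    (η : Measure X) [IsProbabilityMeasure η]
    (Q : Kernel (X × A₁ × A₂) X) [IsMarkovKernel Q]
    -- ARAT transitions: additive densities w.r.t. `λ`
    (q₁ : X → X → A₁ → ℝ) (q₂ : X → X → A₂ → ℝ)
    (hq₁meas : Measurable fun r : X × X × A₁ => q₁ r.1 r.2.1 r.2.2)
    (hq₂meas : Measurable fun r : X × X × A₂ => q₂ r.1 r.2.1 r.2.2)
    (hq₁pos : ∀ y x a, 0 ≤ q₁ y x a) (hq₂pos : ∀ y x a, 0 ≤ q₂ y x a)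
    (hQdens : ∀ x a₁ a₂ D, MeasurableSet D →
      Q (x, a₁, a₂) D = ∫⁻ y in D, ENNReal.ofReal (q₁ y x a₁ + q₂ y x a₂) ∂lam)
    -- feasible-action correspondences
    (Fa₁ : X → Set A₁) (Fa₂ : X → Set A₂)
    (hFa₁meas : ∀ U : Set A₁, IsOpen U → MeasurableSet {x | (Fa₁ x ∩ U).Nonempty})
    (hFa₂meas : ∀ U : Set A₂, IsOpen U → MeasurableSet {x | (Fa₂ x ∩ U).Nonempty})
    (hFa₁cpt : ∀ x, IsCompact (Fa₁ x)) (hFa₂cpt : ∀ x, IsCompact (Fa₂ x))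
    -- history-dependent policies of the two players
    (π₁ : ∀ t, Kernel (Hist X A₁ A₂ t) A₁) (π₂ : ∀ t, Kernel (Hist X A₁ A₂ t) A₂)
    (hm₁ : ∀ t, IsMarkovKernel (π₁ t)) (hm₂ : ∀ t, IsMarkovKernel (π₂ t))
    (hfeas₁ : ∀ t h, π₁ t h (Fa₁ (curState t h)) = 1)
    (hfeas₂ : ∀ t h, π₂ t h (Fa₂ (curState t h)) = 1) :
    -- existence of an equivalent pair of stationary Markov policies
    (∃ π₁' : Kernel X A₁, ∃ π₂' : Kernel X A₂, IsMarkovKernel π₁' ∧ IsMarkovKernel π₂' ∧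
      (∀ x, π₁' x (Fa₁ x) = 1) ∧ (∀ x, π₂' x (Fa₂ x) = 1) ∧
      (occHD β η Q π₁ π₂).map (fun q => (q.1, q.2.1)) = occ1 β Q π₁' π₂' η ∧
      (occHD β η Q π₁ π₂).map (fun q => (q.1, q.2.2)) = occ2 β Q π₁' π₂' η) ∧
    -- if player 1's policy is stationary Markov, it can be kept
    (∀ σ₁ : Kernel X A₁, IsMarkovKernel σ₁ →
      (∀ t, π₁ t = σ₁.comap (curState t) (measurable_curState t)) →
      ∃ π₂' : Kernel X A₂, IsMarkovKernel π₂' ∧ (∀ x, π₂' x (Fa₂ x) = 1) ∧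
        (occHD β η Q π₁ π₂).map (fun q => (q.1, q.2.1)) = occ1 β Q σ₁ π₂' η ∧
        (occHD β η Q π₁ π₂).map (fun q => (q.1, q.2.2)) = occ2 β Q σ₁ π₂' η) ∧
    -- if player 2's policy is stationary Markov, it can be kept
    (∀ σ₂ : Kernel X A₂, IsMarkovKernel σ₂ →
      (∀ t, π₂ t = σ₂.comap (curState t) (measurable_curState t)) →
      ∃ π₁' : Kernel X A₁, IsMarkovKernel π₁' ∧ (∀ x, π₁' x (Fa₁ x) = 1) ∧
        (occHD β η Q π₁ π₂).map (fun q => (q.1, q.2.1)) = occ1 β Q π₁' σ₂ η ∧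
        (occHD β η Q π₁ π₂).map (fun q => (q.1, q.2.2)) = occ2 β Q π₁' σ₂ η) := by
  have := hm₁
  have := hm₂
  obtain ⟨x₀⟩ := nonempty_of_isProbabilityMeasure η
  -- `π₁ 0` lives on `Hist X A₁ A₂ 0`, which is `X` only up to unfolding
  have : Nonempty A₁ := @nonempty_of_isProbabilityMeasure _ _ _ ((hm₁ 0).isProbabilityMeasure x₀)
  have : Nonempty A₂ := @nonempty_of_isProbabilityMeasure _ _ _ ((hm₂ 0).isProbabilityMeasure x₀)
  have hQ : DependsOnlyOnMarginals Q :=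
    dependsOnlyOnMarginals_of_apply_eq_add (measurable_setLIntegral_ofReal lam hq₁meas)
      (measurable_setLIntegral_ofReal lam hq₂meas)
      fun p _ hD => apply_eq_add_of_density hq₁meas hq₁pos hq₂pos hQdens p hD
  have hG₁ := measurableSet_graph_of_isClosed hFa₁meas fun x => (hFa₁cpt x).isClosed
  have hG₂ := measurableSet_graph_of_isClosed hFa₂meas fun x => (hFa₂cpt x).isClosed
  obtain ⟨κ₁, hκ₁, hκ₁F, h₁⟩ :=
    exists_markovKernel_map_occHD_fst (η := η) (Q := Q) (π₂ := π₂) hβ1 hG₁ hfeas₁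
  obtain ⟨κ₂, hκ₂, hκ₂F, h₂⟩ :=
    exists_markovKernel_map_occHD_snd (η := η) (Q := Q) (π₁ := π₁) hβ1 hG₂ hfeas₂
  refine ⟨⟨κ₁, κ₂, hκ₁, hκ₂, hκ₁F, hκ₂F, map_occHD_eq_occ1_and_occ2 hβ1 hQ κ₁ κ₂ h₁ h₂⟩,
    fun σ₁ _ hσ₁ => ⟨κ₂, hκ₂, hκ₂F, map_occHD_eq_occ1_and_occ2 hβ1 hQ σ₁ κ₂
      (map_occHD_fst_of_stationary σ₁ hσ₁) h₂⟩,
    fun σ₂ _ hσ₂ => ⟨κ₁, hκ₁, hκ₁F, map_occHD_eq_occ1_and_occ2 hβ1 hQ κ₁ σ₂ h₁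
      (map_occHD_snd_of_stationary σ₂ hσ₂)⟩⟩

/-- In an ARAT discounted game, for every initial distribution `η` and every
pair of history-dependent policies `(π₁, π₂)` there is a pair of stationary Markov policies
`(π₁', π₂')` whose occupation measure has the same `(X × A₁)`- and `(X × A₂)`-marginals as
`μ_{η,π₁,π₂}`; moreover, if one of the policies is already stationary Markov, it can be kept. -/
theorem stmt7 {X A₁ A₂ : Type u} [MeasurableSpace X] [MeasurableSpace.CountablyGenerated X]
    [MetricSpace A₁] [CompactSpace A₁] [MeasurableSpace A₁] [BorelSpace A₁]
    [MetricSpace A₂] [CompactSpace A₂] [MeasurableSpace A₂] [BorelSpace A₂]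
    (β : ℝ≥0) (hβ0 : 0 < β) (hβ1 : β < 1)
    (lam : Measure X) [IsProbabilityMeasure lam]
    (η : Measure X) [IsProbabilityMeasure η]
    (Q : Kernel (X × A₁ × A₂) X) [IsMarkovKernel Q]
    -- ARAT transitions: additive densities w.r.t. `λ`
    (q₁ : X → X → A₁ → ℝ) (q₂ : X → X → A₂ → ℝ)
    (hq₁meas : Measurable fun r : X × X × A₁ => q₁ r.1 r.2.1 r.2.2)
    (hq₂meas : Measurable fun r : X × X × A₂ => q₂ r.1 r.2.1 r.2.2)
    (hq₁pos : ∀ y x a, 0 ≤ q₁ y x a) (hq₂pos : ∀ y x a, 0 ≤ q₂ y x a)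
    (hQdens : ∀ x a₁ a₂ D, MeasurableSet D →
      Q (x, a₁, a₂) D = ∫⁻ y in D, ENNReal.ofReal (q₁ y x a₁ + q₂ y x a₂) ∂lam)
    -- feasible-action correspondences
    (Fa₁ : X → Set A₁) (Fa₂ : X → Set A₂)
    (hFa₁meas : ∀ U : Set A₁, IsOpen U → MeasurableSet {x | (Fa₁ x ∩ U).Nonempty})
    (hFa₂meas : ∀ U : Set A₂, IsOpen U → MeasurableSet {x | (Fa₂ x ∩ U).Nonempty})
    (hFa₁ne : ∀ x, (Fa₁ x).Nonempty) (hFa₂ne : ∀ x, (Fa₂ x).Nonempty)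
    (hFa₁cpt : ∀ x, IsCompact (Fa₁ x)) (hFa₂cpt : ∀ x, IsCompact (Fa₂ x))
    -- history-dependent policies of the two players
    (π₁ : ∀ t, Kernel (Hist X A₁ A₂ t) A₁) (π₂ : ∀ t, Kernel (Hist X A₁ A₂ t) A₂)
    (hm₁ : ∀ t, IsMarkovKernel (π₁ t)) (hm₂ : ∀ t, IsMarkovKernel (π₂ t))
    (hfeas₁ : ∀ t h, π₁ t h (Fa₁ (curState t h)) = 1)
    (hfeas₂ : ∀ t h, π₂ t h (Fa₂ (curState t h)) = 1) :
    -- existence of an equivalent pair of stationary Markov policies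
    (∃ π₁' : Kernel X A₁, ∃ π₂' : Kernel X A₂, IsMarkovKernel π₁' ∧ IsMarkovKernel π₂' ∧
      (∀ x, π₁' x (Fa₁ x) = 1) ∧ (∀ x, π₂' x (Fa₂ x) = 1) ∧
      (occHD β η Q π₁ π₂).map (fun q => (q.1, q.2.1)) = occ1 β Q π₁' π₂' η ∧
      (occHD β η Q π₁ π₂).map (fun q => (q.1, q.2.2)) = occ2 β Q π₁' π₂' η) ∧
    -- if player 1's policy is stationary Markov, it can be kept
    (∀ σ₁ : Kernel X A₁, IsMarkovKernel σ₁ →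
      (∀ t, π₁ t = σ₁.comap (curState t) (measurable_curState t)) →
      ∃ π₂' : Kernel X A₂, IsMarkovKernel π₂' ∧ (∀ x, π₂' x (Fa₂ x) = 1) ∧
        (occHD β η Q π₁ π₂).map (fun q => (q.1, q.2.1)) = occ1 β Q σ₁ π₂' η ∧
        (occHD β η Q π₁ π₂).map (fun q => (q.1, q.2.2)) = occ2 β Q σ₁ π₂' η) ∧
    -- if player 2's policy is stationary Markov, it can be kept
    (∀ σ₂ : Kernel X A₂, IsMarkovKernel σ₂ →
      (∀ t, π₂ t = σ₂.comap (curState t) (measurable_curState t)) →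
      ∃ π₁' : Kernel X A₁, IsMarkovKernel π₁' ∧ (∀ x, π₁' x (Fa₁ x) = 1) ∧
        (occHD β η Q π₁ π₂).map (fun q => (q.1, q.2.1)) = occ1 β Q π₁' σ₂ η ∧
        (occHD β η Q π₁ π₂).map (fun q => (q.1, q.2.2)) = occ2 β Q π₁' σ₂ η) :=
  stmt7_general β hβ1 lam η Q q₁ q₂ hq₁meas hq₂meas hq₁pos hq₂pos hQdens Fa₁ Fa₂ hFa₁meas hFa₂meas
    hFa₁cpt hFa₂cpt π₁ π₂ hm₁ hm₂ hfeas₁ hfeas₂
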